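/- arXiv:1306.1886 — 4 statements merged into one kernel-verified Lean document; each statement's English description precedes it below -/
import Mathlib

section
/- Let W be a real Hilbert space and let A and B be finite-dimensional subspaces of W with dim A = dim B. Then δ(A, B) = δ(B, A), where δ(A, B) := sup { ‖x − P_B x‖ : x ∈ A, ‖x‖ = 1 } (with δ(A, B) := 0 if A = {0}) and P_B denotes the orthogonal projection of W onto B. -/
/-!
For unit `x ∈ A`, Pythagoras gives `‖x - P_B x‖² = 1 - ‖P_B x‖²`, so `δ(A, B) ≤ d` says exactly
that `T = P_B|_A : A → B` satisfies `‖T x‖ ≥ √(1 - d²) ‖x‖`. The adjoint of `T` is `P_A|_B`.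
A lower bound `‖T x‖ ≥ c ‖x‖` with `c > 0` makes `T` injective, hence (equal dimensions)
bijective, and then `‖y‖² = ⟪T* y, x⟫ ≤ ‖T* y‖ ‖x‖` for `y = T x` transfers the bound to `T*`.
Hence `δ(B, A) ≤ δ(A, B)`, and the reverse inequality by symmetry.
-/

/-- The gap `δ(A, B) = sup { ‖x − P_B x‖ : x ∈ A, ‖x‖ = 1 }` between two
subspaces of a real inner product space (equal to `0` when `A = {0}`, since
`sSup ∅ = 0` in `ℝ`). -/
noncomputable def subspaceGap {W : Type*} [NormedAddCommGroup W] [InnerProductSpace ℝ W]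
    (A B : Submodule ℝ W) [B.HasOrthogonalProjection] : ℝ :=
  sSup {r : ℝ | ∃ x ∈ A, ‖x‖ = 1 ∧ r = ‖x - (B.orthogonalProjectionOnto x : W)‖}

open Module

theorem mul_norm_le_norm_adjoint_of_finrank_eq {E F : Type*}
    [NormedAddCommGroup E] [InnerProductSpace ℝ E] [FiniteDimensional ℝ E]
    [NormedAddCommGroup F] [InnerProductSpace ℝ F] [FiniteDimensional ℝ F]
    (T : E →ₗ[ℝ] F) (S : F →ₗ[ℝ] E) (hTS : ∀ x y, inner ℝ (T x) y = inner ℝ x (S y))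
    (hdim : finrank ℝ E = finrank ℝ F) {c : ℝ} (hT : ∀ x, c * ‖x‖ ≤ ‖T x‖) (y : F) :
    c * ‖y‖ ≤ ‖S y‖ := by
  rcases le_or_gt c 0 with hc | hc
  · exact (mul_nonpos_of_nonpos_of_nonneg hc (norm_nonneg y)).trans (norm_nonneg _)
  have hinj : Function.Injective T := by
    refine (injective_iff_map_eq_zero T).2 fun x hx => norm_eq_zero.1 ?_
    have := hT x
    rw [hx, norm_zero] at this
    exact le_antisymm (nonpos_of_mul_nonpos_right this hc) (norm_nonneg x)
  obtain ⟨x, rfl⟩ := (LinearMap.injective_iff_surjective_of_finrank_eq_finrank hdim).1 hinj y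
  rcases eq_or_ne x 0 with rfl | hx
  · simp
  have hsq : ‖T x‖ ^ 2 ≤ ‖S (T x)‖ * ‖x‖ := by
    rw [← real_inner_self_eq_norm_sq, hTS, mul_comm]
    exact real_inner_le_norm _ _
  refine le_of_mul_le_mul_right ?_ (norm_pos_iff.2 hx)
  nlinarith [hT x, norm_nonneg (T x)]

section Gap

variable {W : Type*} [NormedAddCommGroup W] [InnerProductSpace ℝ W]

theorem norm_sub_orthogonalProjectionOnto_sq (B : Submodule ℝ W) [B.HasOrthogonalProjection]
    (v : W) :
    ‖v - (B.orthogonalProjectionOnto v : W)‖ ^ 2 =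
      ‖v‖ ^ 2 - ‖(B.orthogonalProjectionOnto v : W)‖ ^ 2 := by
  have := B.norm_sq_eq_add_norm_sq_starProjection v
  rw [Submodule.starProjection_orthogonal_val, Submodule.starProjection_apply] at this
  linarith

theorem norm_sub_orthogonalProjectionOnto_le (B : Submodule ℝ W) [B.HasOrthogonalProjection]
    (v : W) : ‖v - (B.orthogonalProjectionOnto v : W)‖ ≤ ‖v‖ := by
  rw [← pow_le_pow_iff_left₀ (norm_nonneg _) (norm_nonneg _) two_ne_zero,
    norm_sub_orthogonalProjectionOnto_sq]
  nlinarith [norm_nonneg (B.orthogonalProjectionOnto v : W)]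

theorem norm_sub_orthogonalProjectionOnto_le_mul_iff (B : Submodule ℝ W)
    [B.HasOrthogonalProjection] {d : ℝ} (hd₀ : 0 ≤ d) (hd₁ : d ≤ 1) (v : W) :
    ‖v - (B.orthogonalProjectionOnto v : W)‖ ≤ d * ‖v‖ ↔
      √(1 - d ^ 2) * ‖v‖ ≤ ‖(B.orthogonalProjectionOnto v : W)‖ := by
  rw [← pow_le_pow_iff_left₀ (norm_nonneg _) (by positivity) two_ne_zero,
    ← pow_le_pow_iff_left₀ (by positivity) (norm_nonneg _) two_ne_zero, mul_pow, mul_pow,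
    Real.sq_sqrt (by nlinarith), norm_sub_orthogonalProjectionOnto_sq]
  constructor <;> intro h <;> linarith

theorem subspaceGap_le_of_forall (A B : Submodule ℝ W) [B.HasOrthogonalProjection] {d : ℝ}
    (hd : 0 ≤ d) (h : ∀ x ∈ A, ‖x‖ = 1 → ‖x - (B.orthogonalProjectionOnto x : W)‖ ≤ d) :
    subspaceGap A B ≤ d :=
  Real.sSup_le (by rintro _ ⟨x, hxA, hx, rfl⟩; exact h x hxA hx) hd

theorem subspaceGap_nonneg (A B : Submodule ℝ W) [B.HasOrthogonalProjection] :
    0 ≤ subspaceGap A B :=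
  Real.sSup_nonneg (by rintro _ ⟨x, -, -, rfl⟩; exact norm_nonneg _)

theorem subspaceGap_le_one (A B : Submodule ℝ W) [B.HasOrthogonalProjection] :
    subspaceGap A B ≤ 1 :=
  subspaceGap_le_of_forall A B zero_le_one fun x _ hx =>
    hx ▸ norm_sub_orthogonalProjectionOnto_le B x

theorem norm_sub_orthogonalProjectionOnto_le_subspaceGap_mul (A B : Submodule ℝ W)
    [B.HasOrthogonalProjection] {x : W} (hx : x ∈ A) :
    ‖x - (B.orthogonalProjectionOnto x : W)‖ ≤ subspaceGap A B * ‖x‖ := by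
  rcases eq_or_ne x 0 with rfl | hx₀
  · simp
  have hbdd : BddAbove
      {r : ℝ | ∃ x ∈ A, ‖x‖ = 1 ∧ r = ‖x - (B.orthogonalProjectionOnto x : W)‖} :=
    ⟨1, by rintro _ ⟨y, -, hy, rfl⟩; exact hy ▸ norm_sub_orthogonalProjectionOnto_le B y⟩
  have hunit : ‖‖x‖⁻¹ • x‖ = 1 := norm_smul_inv_norm hx₀
  have := le_csSup hbdd ⟨_, A.smul_mem _ hx, hunit, rfl⟩
  rw [map_smul, Submodule.coe_smul, ← smul_sub, norm_smul, norm_inv, norm_norm] at this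
  rwa [inv_mul_le_iff₀ (norm_pos_iff.2 hx₀), mul_comm] at this

theorem subspaceGap_le_subspaceGap_of_finrank_eq (A B : Submodule ℝ W)
    [FiniteDimensional ℝ A] [FiniteDimensional ℝ B] (hdim : finrank ℝ A = finrank ℝ B) :
    subspaceGap B A ≤ subspaceGap A B := by
  set d := subspaceGap A B
  have hd₀ : 0 ≤ d := subspaceGap_nonneg A B
  have hd₁ : d ≤ 1 := subspaceGap_le_one A B
  -- Both sides equal `⟪x, y⟫`.
  have hTS : ∀ (x : A) (y : B), inner ℝ (B.orthogonalProjectionOnto (x : W)) y =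
      inner ℝ x (A.orthogonalProjectionOnto (y : W)) := by
    simp
  have hT : ∀ x : A, √(1 - d ^ 2) * ‖x‖ ≤ ‖B.orthogonalProjectionOnto (x : W)‖ := fun x =>
    (norm_sub_orthogonalProjectionOnto_le_mul_iff B hd₀ hd₁ x).1
      (norm_sub_orthogonalProjectionOnto_le_subspaceGap_mul A B x.2)
  have hS := mul_norm_le_norm_adjoint_of_finrank_eq
    (B.orthogonalProjectionOnto.toLinearMap ∘ₗ A.subtype)
    (A.orthogonalProjectionOnto.toLinearMap ∘ₗ B.subtype) hTS hdim hT
  refine subspaceGap_le_of_forall B A hd₀ fun y hyB hy => ?_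
  simpa [hy] using (norm_sub_orthogonalProjectionOnto_le_mul_iff A hd₀ hd₁ y).2 (hS ⟨y, hyB⟩)

end Gap

theorem subspaceGap_symm_general
    {W : Type*} [NormedAddCommGroup W] [InnerProductSpace ℝ W]
    (A B : Submodule ℝ W) [FiniteDimensional ℝ A] [FiniteDimensional ℝ B]
    (hdim : Module.finrank ℝ A = Module.finrank ℝ B) :
    subspaceGap A B = subspaceGap B A :=
  le_antisymm (subspaceGap_le_subspaceGap_of_finrank_eq B A hdim.symm)
    (subspaceGap_le_subspaceGap_of_finrank_eq A B hdim)

/-- **Kato's lemma (symmetry of the gap).**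
For finite-dimensional subspaces `A`, `B` of a real Hilbert space with
`dim A = dim B`, one has `δ(A, B) = δ(B, A)`. -/
theorem subspaceGap_symm
    {W : Type*} [NormedAddCommGroup W] [InnerProductSpace ℝ W] [CompleteSpace W]
    (A B : Submodule ℝ W) [FiniteDimensional ℝ A] [FiniteDimensional ℝ B]
    (hdim : Module.finrank ℝ A = Module.finrank ℝ B) :
    subspaceGap A B = subspaceGap B A :=
  subspaceGap_symm_general A B hdim
end

section
/- Let W be a real Hilbert space and let A and B be finite-dimensional subspaces of W. Let u, v ∈ W be such that u is orthogonal to A, u is orthogonal to B, and v is orthogonal to B. Then ‖P_A v‖ ≤ δ(A, B) · ‖v − u‖, where δ(A, B) := sup { ‖x − P_B x‖ : x ∈ A, ‖x‖ = 1 } (with δ(A, B) := 0 if A = {0}) and P_A, P_B denote the orthogonal projections of W onto A and B. -/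
/-!
Write `w = P_A v`. Since `u ⟂ A`, also `w = P_A (v - u)`, and `y := v - u` is orthogonal to `B`.
Hence `‖w‖² = ⟪y, w⟫ = ⟪y, w - P_B w⟫ ≤ ‖y‖ ‖w - P_B w‖ ≤ δ(A, B) ‖y‖ ‖w‖`,
the last step by the definition of the gap applied to `w / ‖w‖ ∈ A`.
-/

open RealInnerProductSpace

namespace Submodule

variable {W : Type*} [NormedAddCommGroup W] [InnerProductSpace ℝ W]
  {A B : Submodule ℝ W} [B.HasOrthogonalProjection]

theorem norm_sub_starProjection_le (x : W) : ‖x - B.starProjection x‖ ≤ ‖x‖ := by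
  rw [← B.starProjection_orthogonal_val]
  exact Bᗮ.norm_starProjection_apply_le x

theorem subspaceGap_nonneg : 0 ≤ subspaceGap A B :=
  Real.sSup_nonneg <| by rintro _ ⟨x, -, -, rfl⟩; positivity

theorem bddAbove_subspaceGap_set :
    BddAbove {r : ℝ | ∃ x ∈ A, ‖x‖ = 1 ∧ r = ‖x - (B.orthogonalProjectionOnto x : W)‖} :=
  ⟨1, by rintro _ ⟨x, -, hx, rfl⟩; exact hx ▸ B.norm_sub_starProjection_le x⟩

theorem norm_sub_starProjection_le_subspaceGap_mul {x : W} (hx : x ∈ A) :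
    ‖x - B.starProjection x‖ ≤ subspaceGap A B * ‖x‖ := by
  rcases eq_or_ne x 0 with rfl | hx0
  · simp
  have hpos : 0 < ‖x‖ := norm_pos_iff.mpr hx0
  have hunit : ‖‖x‖⁻¹ • x‖ = 1 := by
    rw [norm_smul, norm_inv, norm_norm, inv_mul_cancel₀ hpos.ne']
  have hscale :
      ‖‖x‖⁻¹ • x - B.starProjection (‖x‖⁻¹ • x)‖ = ‖x‖⁻¹ * ‖x - B.starProjection x‖ := by
    rw [map_smul, ← smul_sub, norm_smul, norm_inv, norm_norm]
  have hle : ‖‖x‖⁻¹ • x - B.starProjection (‖x‖⁻¹ • x)‖ ≤ subspaceGap A B :=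
    le_csSup bddAbove_subspaceGap_set ⟨_, A.smul_mem _ hx, hunit, rfl⟩
  rwa [hscale, inv_mul_le_iff₀ hpos, mul_comm] at hle

theorem norm_starProjection_le_subspaceGap_mul [A.HasOrthogonalProjection] {y : W}
    (hy : y ∈ Bᗮ) : ‖A.starProjection y‖ ≤ subspaceGap A B * ‖y‖ := by
  set w := A.starProjection y
  have hw : w ∈ A := A.starProjection_apply_mem y
  have hyw : ⟪y, w⟫ = ‖w‖ ^ 2 := by
    have := A.starProjection_inner_eq_zero y w hw
    rw [inner_sub_left, real_inner_self_eq_norm_sq] at this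
    linarith
  have hyPw : ⟪y, B.starProjection w⟫ = 0 :=
    inner_left_of_mem_orthogonal (B.starProjection_apply_mem w) hy
  have hsq : ‖w‖ ^ 2 ≤ ‖y‖ * (subspaceGap A B * ‖w‖) :=
    calc ‖w‖ ^ 2 = ⟪y, w - B.starProjection w⟫ := by rw [inner_sub_right, hyPw, sub_zero, hyw]
      _ ≤ ‖y‖ * ‖w - B.starProjection w‖ := real_inner_le_norm _ _
      _ ≤ ‖y‖ * (subspaceGap A B * ‖w‖) :=
        mul_le_mul_of_nonneg_left (norm_sub_starProjection_le_subspaceGap_mul hw) (norm_nonneg y)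
  rcases (norm_nonneg w).eq_or_lt with h0 | hpos
  · rw [← h0]
    exact mul_nonneg subspaceGap_nonneg (norm_nonneg y)
  · nlinarith

end Submodule

theorem norm_proj_le_gap_mul_general
    {W : Type*} [NormedAddCommGroup W] [InnerProductSpace ℝ W]
    (A B : Submodule ℝ W) [FiniteDimensional ℝ A] [FiniteDimensional ℝ B]
    (u v : W) (huA : u ∈ Aᗮ) (huB : u ∈ Bᗮ) (hvB : v ∈ Bᗮ) :
    ‖(A.orthogonalProjectionOnto v : W)‖ ≤ subspaceGap A B * ‖v - u‖ := by
  have hPu : A.starProjection u = 0 := A.starProjection_apply_eq_zero_iff.mpr huA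
  have hPv : (A.orthogonalProjectionOnto v : W) = A.starProjection (v - u) := by
    rw [map_sub, hPu, sub_zero, A.starProjection_apply]
  rw [hPv]
  exact Submodule.norm_starProjection_le_subspaceGap_mul (Bᗮ.sub_mem hvB huB)

/-- **Hilbert-space content of Lemma 5.6.**
If `A`, `B` are finite-dimensional subspaces of a real Hilbert space `W`,
`u ⟂ A`, `u ⟂ B`, and `v ⟂ B`, then `‖P_A v‖ ≤ δ(A, B) ‖v − u‖`. -/
theorem norm_proj_le_gap_mul
    {W : Type*} [NormedAddCommGroup W] [InnerProductSpace ℝ W] [CompleteSpace W]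
    (A B : Submodule ℝ W) [FiniteDimensional ℝ A] [FiniteDimensional ℝ B]
    (u v : W) (huA : u ∈ Aᗮ) (huB : u ∈ Bᗮ) (hvB : v ∈ Bᗮ) :
    ‖(A.orthogonalProjectionOnto v : W)‖ ≤ subspaceGap A B * ‖v - u‖ :=
  norm_proj_le_gap_mul_general A B u v huA huB hvB
end

section
/- Let β > 0, C₀ > 0, C₁ > 0, μ ∈ (0, 1), and let δ satisfy 0 < δ < min{ β(1 − μ)/(2 C₁), 1 }. Let e, E, η, ô : ℕ → ℝ be sequences of nonnegative reals such that for all k: (1 − δ) e(k+1) ≤ e(k) − E(k) + (C₀/δ) ô(k); β η(k+1) ≤ β μ η(k) + E(k) + ô(k); and e(k) ≤ C₁ η(k). Then there exist α ∈ (0, 1) and C_δ > 0 such that for all k: (1 − δ) e(k+1) + β η(k+1) ≤ α [ (1 − δ) e(k) + β η(k) ] + C_δ ô(k). -/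
/-- **Theorem 6.2 as a lemma about real sequences.**
Quasi-orthogonality, estimator continuity with Dörfler marking, and the
continuous upper bound combine to give contraction of the quasi-error. -/
theorem quasi_error_contraction
    (β C₀ C₁ μ δ : ℝ)
    (hβ : 0 < β) (hC₀ : 0 < C₀) (hC₁ : 0 < C₁)
    (hμ0 : 0 < μ) (hμ1 : μ < 1)
    (hδ0 : 0 < δ) (hδ1 : δ < min (β * (1 - μ) / (2 * C₁)) 1)
    (e E η oh : ℕ → ℝ)
    (he : ∀ k, 0 ≤ e k) (hE : ∀ k, 0 ≤ E k) (hη : ∀ k, 0 ≤ η k)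
    (hoh : ∀ k, 0 ≤ oh k)
    (hquasi : ∀ k, (1 - δ) * e (k + 1) ≤ e k - E k + (C₀ / δ) * oh k)
    (hcont : ∀ k, β * η (k + 1) ≤ β * μ * η k + E k + oh k)
    (hupper : ∀ k, e k ≤ C₁ * η k) :
    ∃ α : ℝ, 0 < α ∧ α < 1 ∧ ∃ C_δ : ℝ, 0 < C_δ ∧
      ∀ k, (1 - δ) * e (k + 1) + β * η (k + 1) ≤
        α * ((1 - δ) * e k + β * η k) + C_δ * oh k := by
  have hδ1' : δ < 1 := lt_of_lt_of_le hδ1 (min_le_right _ _)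
  have hδβ : δ < β * (1 - μ) / (2 * C₁) := lt_of_lt_of_le hδ1 (min_le_left _ _)
  have hδC₁ : δ * C₁ < β * (1 - μ) / 2 := by
    rw [lt_div_iff₀ (by positivity : (0:ℝ) < 2 * C₁)] at hδβ
    nlinarith
  have hD : 0 < β + (1 - δ) * C₁ := by nlinarith
  refine ⟨(C₁ + β * μ) / (β + (1 - δ) * C₁), by positivity, ?_, C₀ / δ + 1,
    by positivity, ?_⟩
  · rw [div_lt_one hD]
    nlinarith
  · intro k
    have h1 := hquasi k
    have h2 := hcont k
    have h3 := hupper k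
    have hηk := hη k
    have key : e k + β * μ * η k ≤
        (C₁ + β * μ) / (β + (1 - δ) * C₁) * ((1 - δ) * e k + β * η k) := by
      rw [div_mul_eq_mul_div, le_div_iff₀ hD]
      have hfac : (0:ℝ) ≤ 1 - μ * (1 - δ) := by nlinarith
      nlinarith [mul_nonneg (mul_nonneg hβ.le hfac) (sub_nonneg.mpr h3)]
    have := hoh k
    linarith
end

section
/- Let α ∈ (0, 1), κ ∈ (0, 1), β > 0, C_δ > 0, and let q, o, ô : ℕ → ℝ be sequences of nonnegative reals such that for every k: q(k+1) ≤ α q(k) + C_δ ô(k); ô(k) ≤ o(k); o(k+1) ≤ o(k); β o(k) ≤ q(k); and whenever C_δ ô(k) ≥ ((1 − α)/2) q(k) one has o(k+1) ≤ κ o(k). Then there exist constants ζ > 0, C_q > 0 and γ ∈ (0, 1) such that q(k) + ζ o(k) ≤ C_q γ^k for all k. -/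
/-!
The weighted quantity `e k = q k + ζ * o k` contracts by a fixed factor `γ < 1` at every step.
If the oscillation term dominates, the oscillation itself is reduced by `κ` and absorbs the
`C_δ * oh k` term of the contraction of `q`; `ζ = 2 C_δ / (1 - κ)` is chosen so that
`C_δ + ζ κ = ζ (1 + κ) / 2`. Otherwise `q` alone contracts
by `(1 + α) / 2`, and the part of `ζ * o k` that is not reduced is paid for by `β * o k ≤ q k`.
-/

theorem le_mul_add_of_oscillation_reduction {q q' o o' oh α κ C ζ γ : ℝ}
    (hq : 0 ≤ q) (ho : 0 ≤ o) (hC : 0 ≤ C) (hζ : 0 ≤ ζ)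
    (hcontr : q' ≤ α * q + C * oh) (hoh : oh ≤ o) (hred : o' ≤ κ * o)
    (hαγ : α ≤ γ) (hκγ : C + ζ * κ ≤ γ * ζ) :
    q' + ζ * o' ≤ γ * (q + ζ * o) :=
  calc q' + ζ * o' ≤ α * q + C * o + ζ * (κ * o) := by
        gcongr
        exact hcontr.trans (by gcongr)
    _ = α * q + (C + ζ * κ) * o := by ring
    _ ≤ γ * q + (γ * ζ) * o := by gcongr
    _ = γ * (q + ζ * o) := by ring

theorem le_mul_add_of_estimator_dominance {q q' o o' ρ β ζ γ : ℝ}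
    (ho : 0 ≤ o) (hζ : 0 ≤ ζ) (hq' : q' ≤ ρ * q) (hmono : o' ≤ o) (hdom : β * o ≤ q)
    (hργ : ρ ≤ γ) (hγ : ζ + ρ * β ≤ γ * (ζ + β)) :
    q' + ζ * o' ≤ γ * (q + ζ * o) :=
  calc q' + ζ * o' ≤ ρ * q + ζ * o := by gcongr
    _ ≤ ρ * q + ζ * o + ((γ * (ζ + β) - (ζ + ρ * β)) * o + (γ - ρ) * (q - β * o)) := by
        have : 0 ≤ γ - ρ := sub_nonneg.2 hργ
        have : 0 ≤ q - β * o := sub_nonneg.2 hdom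
        have : 0 ≤ γ * (ζ + β) - (ζ + ρ * β) := sub_nonneg.2 hγ
        exact le_add_of_nonneg_right (by positivity)
    _ = γ * (q + ζ * o) := by ring

theorem exists_pos_le_mul_pow_of_le_mul {e : ℕ → ℝ} {γ : ℝ} (hγ : 0 ≤ γ)
    (he : ∀ k, e (k + 1) ≤ γ * e k) : ∃ C, 0 < C ∧ ∀ k, e k ≤ C * γ ^ k := by
  refine ⟨|e 0| + 1, by positivity, fun k => ?_⟩
  calc e k ≤ γ ^ k * e 0 := le_geom hγ k fun j _ => he j
    _ ≤ γ ^ k * (|e 0| + 1) := by gcongr; linarith [le_abs_self (e 0)]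
    _ = (|e 0| + 1) * γ ^ k := mul_comm _ _

theorem exists_contraction_factor {μ ρ ζ β : ℝ} (hμ0 : 0 < μ) (hμ1 : μ < 1) (hρ : ρ < 1)
    (hζ : 0 ≤ ζ) (hβ : 0 < β) :
    ∃ γ, 0 < γ ∧ γ < 1 ∧ μ ≤ γ ∧ ρ ≤ γ ∧ ζ + ρ * β ≤ γ * (ζ + β) := by
  have hρ_le : ρ ≤ (ζ + ρ * β) / (ζ + β) := (le_div_iff₀ (by positivity)).2 (by nlinarith)
  have hlt_one : (ζ + ρ * β) / (ζ + β) < 1 := (div_lt_one (by positivity)).2 (by nlinarith)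
  refine ⟨max μ ((ζ + ρ * β) / (ζ + β)), lt_max_of_lt_left hμ0, max_lt hμ1 hlt_one,
    le_max_left _ _, le_max_of_le_right hρ_le, ?_⟩
  exact (div_le_iff₀ (by positivity)).1 (le_max_right _ _)

theorem termination_in_finite_steps_general
    (α κ β C_δ : ℝ) (hα1 : α < 1) (hκ0 : 0 < κ) (hκ1 : κ < 1)
    (hβ : 0 < β) (hC_δ : 0 < C_δ)
    (q o oh : ℕ → ℝ)
    (hq : ∀ k, 0 ≤ q k) (ho : ∀ k, 0 ≤ o k)
    (hcontr : ∀ k, q (k + 1) ≤ α * q k + C_δ * oh k)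
    (hohle : ∀ k, oh k ≤ o k)
    (hrefine : ∀ k, o (k + 1) ≤ o k)
    (hdom : ∀ k, β * o k ≤ q k)
    (hcase2 : ∀ k, (1 - α) / 2 * q k ≤ C_δ * oh k → o (k + 1) ≤ κ * o k) :
    ∃ ζ : ℝ, 0 < ζ ∧ ∃ C_q : ℝ, 0 < C_q ∧ ∃ γ : ℝ, 0 < γ ∧ γ < 1 ∧
      ∀ k, q k + ζ * o k ≤ C_q * γ ^ k := by
  set ζ := 2 * C_δ / (1 - κ)
  have hζ : 0 < ζ := div_pos (by linarith) (by linarith)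
  have hζκ : C_δ + ζ * κ = (1 + κ) / 2 * ζ := by
    have : ζ * (1 - κ) = 2 * C_δ := div_mul_cancel₀ _ (by linarith)
    linarith
  obtain ⟨γ, hγ0, hγ1, hκγ, hργ, hγest⟩ := exists_contraction_factor (μ := (1 + κ) / 2)
    (ρ := (1 + α) / 2) (by linarith) (by linarith) (by linarith) hζ.le hβ
  have hstep : ∀ k, q (k + 1) + ζ * o (k + 1) ≤ γ * (q k + ζ * o k) := by
    intro k
    by_cases hosc : (1 - α) / 2 * q k ≤ C_δ * oh k
    · exact le_mul_add_of_oscillation_reduction (hq k) (ho k) hC_δ.le hζ.le (hcontr k) (hohle k)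
        (hcase2 k hosc) (by linarith) (hζκ.trans_le (by gcongr))
    · have hq' : q (k + 1) ≤ (1 + α) / 2 * q k := by
        rw [not_le] at hosc
        linarith [hcontr k]
      exact le_mul_add_of_estimator_dominance (ho k) hζ.le hq' (hrefine k) (hdom k) hργ hγest
  obtain ⟨C_q, hC_q, hdecay⟩ :=
    exists_pos_le_mul_pow_of_le_mul (e := fun k => q k + ζ * o k) hγ0.le hstep
  exact ⟨ζ, hζ, C_q, hC_q, γ, hγ0, hγ1, hdecay⟩

/-- **Theorem 6.4 (Termination in Finite Steps) as a lemma about real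
sequences.** The quasi-error plus a multiple of the oscillation decays
geometrically. -/
theorem termination_in_finite_steps
    (α κ β C_δ : ℝ) (hα0 : 0 < α) (hα1 : α < 1) (hκ0 : 0 < κ) (hκ1 : κ < 1)
    (hβ : 0 < β) (hC_δ : 0 < C_δ)
    (q o oh : ℕ → ℝ)
    (hq : ∀ k, 0 ≤ q k) (ho : ∀ k, 0 ≤ o k) (hoh : ∀ k, 0 ≤ oh k)
    (hcontr : ∀ k, q (k + 1) ≤ α * q k + C_δ * oh k)
    (hohle : ∀ k, oh k ≤ o k)
    (hrefine : ∀ k, o (k + 1) ≤ o k)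
    (hdom : ∀ k, β * o k ≤ q k)
    (hcase2 : ∀ k, (1 - α) / 2 * q k ≤ C_δ * oh k → o (k + 1) ≤ κ * o k) :
    ∃ ζ : ℝ, 0 < ζ ∧ ∃ C_q : ℝ, 0 < C_q ∧ ∃ γ : ℝ, 0 < γ ∧ γ < 1 ∧
      ∀ k, q k + ζ * o k ≤ C_q * γ ^ k :=
  termination_in_finite_steps_general α κ β C_δ hα1 hκ0 hκ1 hβ hC_δ q o oh hq ho hcontr hohle
    hrefine hdom hcase2
end
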